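/- Let M be a spectral space, B a commutative ring, and let φ : M → B be a constructible function. Then there exist finitely many closed constructible subsets Z₁, …, Zₙ ⊆ M and elements b₁, …, bₙ ∈ B such that φ = Σᵢ bᵢ · 1_{Zᵢ}, where 1_{Zᵢ} is the indicator function of Zᵢ. -/

import Mathlib

/-- A spectral space: quasi-compact, quasi-separated, sober, and the
quasi-compact open subsets form a basis of the topology. -/
def SpectralSpace' (X : Type*) [TopologicalSpace X] : Prop :=
  CompactSpace X ∧ QuasiSeparatedSpace X ∧ QuasiSober X ∧ T0Space X ∧
    TopologicalSpace.IsTopologicalBasis {U : Set X | IsOpen U ∧ IsCompact U}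

/-- The constructible subsets: the smallest class of subsets containing the
quasi-compact open subsets and stable under complements and finite unions
(hence also finite intersections). -/
inductive IsConstr {X : Type*} [TopologicalSpace X] : Set X → Prop
  | qcOpen : ∀ U : Set X, IsOpen U → IsCompact U → IsConstr U
  | compl : ∀ A : Set X, IsConstr A → IsConstr Aᶜ
  | union : ∀ A B : Set X, IsConstr A → IsConstr B → IsConstr (A ∪ B)

/-- A constructible function: there is a finite partition of the space into
locally closed constructible subsets on each of which the function is constant. -/
def IsConsFun {X : Type*} [TopologicalSpace X] {B : Type*} (φ : X → B) : Prop :=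
  ∃ (n : ℕ) (P : Fin n → Set X),
    (∀ i, IsLocallyClosed (P i) ∧ IsConstr (P i)) ∧
    (∀ x, ∃! i, x ∈ P i) ∧
    ∀ i, ∀ x ∈ P i, ∀ y ∈ P i, φ x = φ y

/-!
Indicators of closed constructible sets contain `1` and are closed under products
(`1_Z * 1_W = 1_{Z ∩ W}`), so their `B`-span is a `B`-subalgebra of `M → B`. This subalgebra
contains `1_A` for every constructible `A`: constructible sets are generated from quasi-compact
opens `U`, with `1_U = 1 - 1_{Uᶜ}` and `Uᶜ` closed, by complements, `1_{Aᶜ} = 1 - 1_A`, and unions,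
`1_{A ∪ C} = 1_A + 1_C - 1_A * 1_C`. A constructible function is a `B`-combination of the
indicators of the pieces of its partition.
-/

namespace IsConstr

variable {X : Type*} [TopologicalSpace X]

lemma empty : IsConstr (∅ : Set X) := qcOpen ∅ isOpen_empty isCompact_empty

lemma univ : IsConstr (Set.univ : Set X) := by simpa using compl _ (empty (X := X))

lemma inter {A C : Set X} (hA : IsConstr A) (hC : IsConstr C) : IsConstr (A ∩ C) := by
  simpa using compl _ (union _ _ (compl _ hA) (compl _ hC))

end IsConstr

def closedConstrIndicators (M B : Type*) [TopologicalSpace M] [CommRing B] :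
    Submonoid (M → B) where
  carrier := {f | ∃ Z : Set M, IsClosed Z ∧ IsConstr Z ∧ Z.indicator 1 = f}
  one_mem' := ⟨Set.univ, isClosed_univ, IsConstr.univ, Set.indicator_univ 1⟩
  mul_mem' := by
    rintro _ _ ⟨Z, hZ, hZc, rfl⟩ ⟨W, hW, hWc, rfl⟩
    exact ⟨Z ∩ W, hZ.inter hW, hZc.inter hWc, Set.inter_indicator_one⟩

section

variable {M B : Type*} [TopologicalSpace M] [CommRing B]

lemma span_closedConstrIndicators_eq_adjoin :
    Submodule.span B (closedConstrIndicators M B : Set (M → B)) =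
      Subalgebra.toSubmodule (Algebra.adjoin B (closedConstrIndicators M B : Set (M → B))) := by
  rw [Algebra.adjoin_eq_span, Submonoid.closure_eq]

lemma IsConstr.indicator_one_mem_adjoin {A : Set M} (hA : IsConstr A) :
    A.indicator 1 ∈ Algebra.adjoin B (closedConstrIndicators M B : Set (M → B)) := by
  induction hA with
  | qcOpen U hU hUc =>
    have hcompl : Uᶜ.indicator (1 : M → B) ∈ closedConstrIndicators M B :=
      ⟨Uᶜ, hU.isClosed_compl, .compl _ (.qcOpen _ hU hUc), rfl⟩
    rw [← compl_compl U, Set.indicator_compl]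
    exact sub_mem (one_mem _) (Algebra.subset_adjoin hcompl)
  | compl A _ ih =>
    rw [Set.indicator_compl]
    exact sub_mem (one_mem _) ih
  | union A C _ _ ihA ihC =>
    rw [eq_sub_of_add_eq (Set.indicator_union_add_inter (1 : M → B) A C), Set.inter_indicator_one]
    exact sub_mem (add_mem ihA ihC) (mul_mem ihA ihC)

lemma exists_eq_sum_indicator_of_mem_span {f : M → B}
    (hf : f ∈ Submodule.span B (closedConstrIndicators M B : Set (M → B))) :
    ∃ (n : ℕ) (Z : Fin n → Set M) (b : Fin n → B),
      (∀ i, IsClosed (Z i) ∧ IsConstr (Z i)) ∧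
      f = fun x => ∑ i, Set.indicator (Z i) (fun _ => b i) x := by
  obtain ⟨n, b, g, rfl⟩ := Submodule.mem_span_set'.mp hf
  choose Z hZ hZc hgZ using fun i => (g i).2
  refine ⟨n, Z, b, fun i => ⟨hZ i, hZc i⟩, funext fun x => ?_⟩
  simp only [Finset.sum_apply, Pi.smul_apply, ← hgZ]
  refine Finset.sum_congr rfl fun i _ => ?_
  by_cases hx : x ∈ Z i <;> simp [hx]

end

lemma sum_indicator_of_existsUnique_mem {X ι β : Type*} [Fintype ι] [AddCommMonoid β]
    {P : ι → Set X} (hP : ∀ x, ∃! i, x ∈ P i) (f : X → β) :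
    ∑ i, (P i).indicator f = f := by
  ext x
  obtain ⟨i, hi, huniq⟩ := hP x
  rw [Finset.sum_apply, Finset.sum_eq_single i (fun j _ hj => Set.indicator_of_notMem
    (fun hx => hj (huniq j hx)) f) (by simp), Set.indicator_of_mem hi]

lemma Set.indicator_eq_smul_indicator_one {X B : Type*} [Semiring B] {s : Set X} {f : X → B}
    (hf : ∀ x ∈ s, ∀ y ∈ s, f x = f y) : ∃ c : B, s.indicator f = c • s.indicator 1 := by
  rcases s.eq_empty_or_nonempty with rfl | ⟨x₀, hx₀⟩
  · exact ⟨0, by simp [Pi.zero_def]⟩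
  · refine ⟨f x₀, funext fun x => ?_⟩
    by_cases hx : x ∈ s
    · simp [hx, hf x hx x₀ hx₀]
    · simp [hx]

theorem consFun_eq_sum_indicators_general
    {M : Type*} [TopologicalSpace M] {B : Type*} [CommRing B]
    (φ : M → B) (hφ : IsConsFun φ) :
    ∃ (n : ℕ) (Z : Fin n → Set M) (b : Fin n → B),
      (∀ i, IsClosed (Z i) ∧ IsConstr (Z i)) ∧
      φ = fun x => ∑ i, Set.indicator (Z i) (fun _ => b i) x := by
  obtain ⟨n, P, hP, hpart, hconst⟩ := hφ
  apply exists_eq_sum_indicator_of_mem_span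
  rw [← sum_indicator_of_existsUnique_mem hpart φ, span_closedConstrIndicators_eq_adjoin]
  refine Submodule.sum_mem _ fun i _ => ?_
  obtain ⟨c, hc⟩ := Set.indicator_eq_smul_indicator_one (hconst i)
  rw [hc]
  exact Subalgebra.smul_mem _ (hP i).2.indicator_one_mem_adjoin c

/-- Every `B`-valued constructible function on a spectral space is a finite sum
`Σᵢ bᵢ · 1_{Zᵢ}` of multiples of indicator functions of closed constructible subsets. -/
theorem consFun_eq_sum_indicators
    {M : Type*} [TopologicalSpace M] (hM : SpectralSpace' M) {B : Type*} [CommRing B]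
    (φ : M → B) (hφ : IsConsFun φ) :
    ∃ (n : ℕ) (Z : Fin n → Set M) (b : Fin n → B),
      (∀ i, IsClosed (Z i) ∧ IsConstr (Z i)) ∧
      φ = fun x => ∑ i, Set.indicator (Z i) (fun _ => b i) x :=
  consFun_eq_sum_indicators_general φ hφ
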